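/- (Lemma 2.1) Let ℓ, m, n, n̄ ∈ ℕ, let H : [0,∞) → ℝ^{n̄×m} and A : [0,∞)×ℝ^ℓ×ℝⁿ×ℝ^m×ℝ^n̄ → ℝ^{m×m} be continuous, and let g ∈ C⁰([0,∞);ℝ) satisfy 0 < g(t) < 1 for all t ≥ 0. Fix ξ ≥ 1 and t₀ ≥ 0. Let β_R : [0,∞) → [0,∞) be continuous and nondecreasing, let Y_R : [0,∞) → nonempty subsets of ℝ^n̄ and Q_R : [0,∞) → nonempty subsets of ℝ^ℓ be set-valued maps satisfying the Compactness Property, let P_R ∈ C¹([t₀,∞); ℝ^{m×m}) be symmetric-matrix-valued with eᵀP_R(t)e ≥ |e|² for all e ∈ ℝ^m and t ≥ t₀, and let d_R ∈ C⁰([t₀,∞);ℝ) be such that eᵀP_R(t)A(t,q,x,e,y)e + (1/2)eᵀP_R′(t)e ≤ −d_R(t)·eᵀP_R(t)e for all t ≥ t₀, q ∈ Q_R(t), x ∈ ℝⁿ with |x| ≤ β_R(t), e ∈ ℝ^m with H(t)e = 0, |e| ≤ ξ and eᵀP_R(t)e ≥ g(t), and y ∈ Y_R(t). Then for every d̄_R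 ∈ C⁰([t₀,∞);ℝ) with d̄_R(t) < d_R(t) for all t ≥ t₀, there exists φ_R ∈ C¹([t₀,∞);(0,∞)) such that eᵀP_R(t)A(t,q,x,e,y)e + (1/2)eᵀP_R′(t)e ≤ φ_R(t)|H(t)e|² − d̄_R(t)·eᵀP_R(t)e for all t ≥ t₀, q ∈ Q_R(t), x ∈ ℝⁿ with |x| ≤ β_R(t), e ∈ ℝ^m with |e| ≤ ξ and eᵀP_R(t)e ≥ g(t), and y ∈ Y_R(t). -/

import Mathlib

open Matrix Filter

/-- Euclidean norm on `Fin k → ℝ`. -/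
noncomputable def eunorm {k : ℕ} (x : Fin k → ℝ) : ℝ := Real.sqrt (∑ i, (x i) ^ 2)

/-- A set-valued map `Q` from (a subset `S` of) a space `X` to subsets of a space `Y` satisfies
the *Compactness Property* if whenever `xs ν → x` within `S` and `qs ν ∈ Q (xs ν)`, some
subsequence of `(qs ν)` converges to a point of `Q x`. -/
def SetCP {X Y : Type*} [TopologicalSpace X] [TopologicalSpace Y]
    (S : Set X) (Q : X → Set Y) : Prop :=
  ∀ (xs : ℕ → X) (qs : ℕ → Y) (x : X), (∀ ν, xs ν ∈ S) → x ∈ S →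
    Tendsto xs atTop (nhds x) → (∀ ν, qs ν ∈ Q (xs ν)) →
    ∃ φ : ℕ → ℕ, StrictMono φ ∧ ∃ q ∈ Q x, Tendsto (qs ∘ φ) atTop (nhds q)


lemma eunorm_nonneg {k : ℕ} (x : Fin k → ℝ) : 0 ≤ eunorm x := Real.sqrt_nonneg _

lemma eunorm_sq {k : ℕ} (x : Fin k → ℝ) : eunorm x ^ 2 = ∑ i, (x i) ^ 2 :=
  Real.sq_sqrt (Finset.sum_nonneg fun i _ => sq_nonneg _)

lemma eunorm_eq_zero {k : ℕ} {x : Fin k → ℝ} (h : eunorm x = 0) : x = 0 := by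
  have h2 : ∑ i, (x i) ^ 2 = 0 := by
    have := eunorm_sq x; rw [h] at this; simpa using this.symm
  funext i
  have := (Finset.sum_eq_zero_iff_of_nonneg (fun i _ => sq_nonneg (x i))).mp h2 i (Finset.mem_univ i)
  exact pow_eq_zero_iff (by norm_num) |>.mp this

lemma abs_le_eunorm {k : ℕ} (x : Fin k → ℝ) (i : Fin k) : |x i| ≤ eunorm x := by
  rw [← Real.sqrt_sq_eq_abs]
  exact Real.sqrt_le_sqrt (Finset.single_le_sum (fun j _ => sq_nonneg (x j)) (Finset.mem_univ i))

lemma norm_le_eunorm {k : ℕ} (x : Fin k → ℝ) : ‖x‖ ≤ eunorm x := by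
  rcases isEmpty_or_nonempty (Fin k) with h | h
  · simp [Subsingleton.elim x 0, eunorm_nonneg]
  · rw [pi_norm_le_iff_of_nonneg (eunorm_nonneg x)]
    intro i; exact abs_le_eunorm x i

lemma continuous_eunorm {k : ℕ} : Continuous (eunorm (k := k)) := by
  unfold eunorm
  exact Real.continuous_sqrt.comp (continuous_finset_sum _ fun i _ => (continuous_apply i).pow 2)

lemma tendsto_quad {m : ℕ} {M : ℕ → Matrix (Fin m) (Fin m) ℝ} {e : ℕ → Fin m → ℝ}
    {M₀ : Matrix (Fin m) (Fin m) ℝ} {e₀ : Fin m → ℝ}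
    (hM : ∀ i j, Tendsto (fun ν => M ν i j) atTop (nhds (M₀ i j)))
    (he : Tendsto e atTop (nhds e₀)) :
    Tendsto (fun ν => e ν ⬝ᵥ (M ν).mulVec (e ν)) atTop (nhds (e₀ ⬝ᵥ M₀.mulVec e₀)) := by
  have hei : ∀ i, Tendsto (fun ν => e ν i) atTop (nhds (e₀ i)) := fun i =>
    (tendsto_pi_nhds.mp he) i
  simp only [dotProduct, Matrix.mulVec, dotProduct]
  exact tendsto_finset_sum _ fun i _ =>
    (hei i).mul (tendsto_finset_sum _ fun j _ => (hM i j).mul (hei j))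

/-- **Lemma 2.1.** Under Hypothesis H1 for the pair `(H, A)`, for every continuous
`d̄_R` with `d̄_R < d_R` on `[t₀,∞)` there exists `φ_R ∈ C¹([t₀,∞);(0,∞))` such that
`eᵀP_R A e + (1/2)eᵀP_R′ e ≤ φ_R(t)|H(t)e|² − d̄_R(t)·eᵀP_R e` for all admissible
`t, q, x, e, y` (now with `e` unrestricted in `ℝ^m` rather than `e ∈ ker H(t)`). -/
theorem stmt5 (ℓ m n nout : ℕ)
    (H : ℝ → Matrix (Fin nout) (Fin m) ℝ)
    (hH : ∀ i j, ContinuousOn (fun t => H t i j) (Set.Ici 0))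
    (A : ℝ → (Fin ℓ → ℝ) → (Fin n → ℝ) → (Fin m → ℝ) → (Fin nout → ℝ) →
      Matrix (Fin m) (Fin m) ℝ)
    (hA : ContinuousOn
      (fun p : ℝ × (Fin ℓ → ℝ) × (Fin n → ℝ) × (Fin m → ℝ) × (Fin nout → ℝ) =>
        A p.1 p.2.1 p.2.2.1 p.2.2.2.1 p.2.2.2.2) (Set.Ici 0 ×ˢ Set.univ))
    (g : ℝ → ℝ) (hgc : ContinuousOn g (Set.Ici 0))
    (hg01 : ∀ t, 0 ≤ t → 0 < g t ∧ g t < 1)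
    (ξ t₀ : ℝ) (hξ : 1 ≤ ξ) (ht₀ : 0 ≤ t₀)
    (βR : ℝ → ℝ) (hβc : ContinuousOn βR (Set.Ici 0)) (hβm : MonotoneOn βR (Set.Ici 0))
    (hβ0 : ∀ t, 0 ≤ t → 0 ≤ βR t)
    (Y : ℝ → Set (Fin nout → ℝ)) (hYne : ∀ t, 0 ≤ t → (Y t).Nonempty)
    (hYcp : SetCP (Set.Ici 0) Y)
    (Q : ℝ → Set (Fin ℓ → ℝ)) (hQne : ∀ t, 0 ≤ t → (Q t).Nonempty)
    (hQcp : SetCP (Set.Ici 0) Q)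
    (P P' : ℝ → Matrix (Fin m) (Fin m) ℝ)
    (hPsymm : ∀ t, t₀ ≤ t → (P t).IsSymm)
    (hP'c : ∀ i j, ContinuousOn (fun t => P' t i j) (Set.Ici t₀))
    (hPd : ∀ t, t₀ ≤ t → ∀ i j, HasDerivWithinAt (fun s => P s i j) (P' t i j) (Set.Ici t₀) t)
    (hPlow : ∀ t, t₀ ≤ t → ∀ e : Fin m → ℝ, eunorm e ^ 2 ≤ e ⬝ᵥ (P t).mulVec e)
    (d : ℝ → ℝ) (hdc : ContinuousOn d (Set.Ici t₀))
    (hineq : ∀ t, t₀ ≤ t → ∀ q ∈ Q t, ∀ x : Fin n → ℝ, eunorm x ≤ βR t →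
      ∀ e : Fin m → ℝ, (H t).mulVec e = 0 → eunorm e ≤ ξ → g t ≤ e ⬝ᵥ (P t).mulVec e →
      ∀ y ∈ Y t,
        e ⬝ᵥ (P t).mulVec ((A t q x e y).mulVec e) + (1 / 2) * (e ⬝ᵥ (P' t).mulVec e)
          ≤ -(d t) * (e ⬝ᵥ (P t).mulVec e))
    (dbar : ℝ → ℝ) (hdbarc : ContinuousOn dbar (Set.Ici t₀))
    (hdbarlt : ∀ t, t₀ ≤ t → dbar t < d t) :
    ∃ φ φ' : ℝ → ℝ,
      (∀ t, t₀ ≤ t → 0 < φ t) ∧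
      ContinuousOn φ' (Set.Ici t₀) ∧
      (∀ t, t₀ ≤ t → HasDerivWithinAt φ (φ' t) (Set.Ici t₀) t) ∧
      (∀ t, t₀ ≤ t → ∀ q ∈ Q t, ∀ x : Fin n → ℝ, eunorm x ≤ βR t →
        ∀ e : Fin m → ℝ, eunorm e ≤ ξ → g t ≤ e ⬝ᵥ (P t).mulVec e →
        ∀ y ∈ Y t,
          e ⬝ᵥ (P t).mulVec ((A t q x e y).mulVec e) + (1 / 2) * (e ⬝ᵥ (P' t).mulVec e)
            ≤ φ t * eunorm ((H t).mulVec e) ^ 2 - dbar t * (e ⬝ᵥ (P t).mulVec e)) := by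
  classical
  have ht0' : (0:ℝ) ≤ t₀ := ht₀
  set T : ℝ → Set ℝ := fun s => {c : ℝ | 1 ≤ c ∧ (t₀ ≤ s →
    ∀ q ∈ Q s, ∀ x : Fin n → ℝ, eunorm x ≤ βR s →
    ∀ e : Fin m → ℝ, eunorm e ≤ ξ → g s ≤ e ⬝ᵥ (P s).mulVec e →
    ∀ y ∈ Y s,
      e ⬝ᵥ (P s).mulVec ((A s q x e y).mulVec e) + (1/2) * (e ⬝ᵥ (P' s).mulVec e)
        ≤ c * eunorm ((H s).mulVec e) ^ 2 - dbar s * (e ⬝ᵥ (P s).mulVec e))} with hT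
  have hconv : ∀ s, Convex ℝ (T s) := by
    intro s c₁ hc₁ c₂ hc₂ a b ha hb hab
    constructor
    · have h1 := hc₁.1; have h2 := hc₂.1
      simp only [smul_eq_mul]
      nlinarith [mul_le_mul_of_nonneg_left h1 ha, mul_le_mul_of_nonneg_left h2 hb]
    · intro hs q hq x hx e he hge y hy
      have h1 := hc₁.2 hs q hq x hx e he hge y hy
      have h2 := hc₂.2 hs q hq x hx e he hge y hy
      simp only [smul_eq_mul]
      have h1a := mul_le_mul_of_nonneg_left h1 ha
      have h2b := mul_le_mul_of_nonneg_left h2 hb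
      set L := e ⬝ᵥ (P s).mulVec ((A s q x e y).mulVec e) + (1/2) * (e ⬝ᵥ (P' s).mulVec e)
        with hL
      set hh := eunorm ((H s).mulVec e) ^ 2 with hhh
      set dp := dbar s * (e ⬝ᵥ (P s).mulVec e) with hdp
      have hLsum : a * L + b * L = L := by rw [← add_mul, hab, one_mul]
      have hcomb : (a * c₁ + b * c₂) * hh - dp
          = a * (c₁ * hh - dp) + b * (c₂ * hh - dp) + (a + b - 1) * dp := by ring
      rw [hcomb, hab]
      linarith [h1a, h2b, hLsum]
  have key : ∀ t, t₀ ≤ t → ∃ c : ℝ, ∀ᶠ u in nhds t, c ∈ T u := by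
    intro t ht
    by_contra hcon
    push_neg at hcon
    have hcon' : ∀ ν : ℕ, ∃ u : ℝ, dist u t < 1/((ν:ℝ)+1) ∧ ((ν:ℝ)+1) ∉ T u := by
      intro ν
      by_contra hall
      push_neg at hall
      exact hcon ((ν:ℝ)+1)
        (Metric.eventually_nhds_iff.mpr ⟨1/((ν:ℝ)+1), by positivity, fun u hu => not_not.mpr (hall u hu)⟩)
    have hcon2 : ∀ ν : ℕ, ∃ u : ℝ, dist u t < 1/((ν:ℝ)+1) ∧ t₀ ≤ u ∧ ∃ q ∈ Q u,
        ∃ x : Fin n → ℝ, eunorm x ≤ βR u ∧ ∃ e : Fin m → ℝ, eunorm e ≤ ξ ∧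
        g u ≤ e ⬝ᵥ (P u).mulVec e ∧ ∃ y ∈ Y u,
        ((ν:ℝ)+1) * eunorm ((H u).mulVec e) ^ 2 - dbar u * (e ⬝ᵥ (P u).mulVec e)
          < e ⬝ᵥ (P u).mulVec ((A u q x e y).mulVec e) + (1/2) * (e ⬝ᵥ (P' u).mulVec e) := by
      intro ν
      obtain ⟨u, hu1, hu2⟩ := hcon' ν
      refine ⟨u, hu1, ?_⟩
      simp only [hT, Set.mem_setOf_eq, not_and, not_forall, not_le] at hu2
      have := hu2 (by norm_num : (1:ℝ) ≤ (ν:ℝ)+1)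
      obtain ⟨htu, q, hq, x, hx, e, he, hge, y, hy, hlt⟩ := this
      exact ⟨htu, q, hq, x, hx, e, he, hge, y, hy, hlt⟩
    choose s hsd hts q hqQ x hxb e heb hgep y hyY hlt using hcon2
    have ht0 : (0:ℝ) ≤ t := le_trans ht0' ht
    have hsIci : ∀ ν, s ν ∈ Set.Ici (0:ℝ) := fun ν => le_trans ht0' (hts ν)
    have hsle : ∀ ν, s ν ≤ t + 1 := by
      intro ν
      have h1 : dist (s ν) t < 1 := lt_of_lt_of_le (hsd ν) (by
        rw [div_le_one (by positivity)]
        linarith [Nat.cast_nonneg (α := ℝ) ν])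
      rw [Real.dist_eq] at h1
      have := abs_lt.mp h1
      linarith [this.2]
    have hstt : Tendsto s atTop (nhds t) := by
      rw [tendsto_iff_dist_tendsto_zero]
      exact squeeze_zero (fun ν => dist_nonneg) (fun ν => le_of_lt (hsd ν))
        tendsto_one_div_add_atTop_nhds_zero_nat
    -- subsequence for q
    obtain ⟨φ₁, hφ₁m, qbar, hqbar, hqtend⟩ := hQcp s q t hsIci ht0 hstt hqQ
    -- subsequence for x
    have hxball : ∀ ν, x (φ₁ ν) ∈ Metric.closedBall (0 : Fin n → ℝ) (βR (t+1)) := by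
      intro ν
      rw [Metric.mem_closedBall, dist_zero_right]
      calc ‖x (φ₁ ν)‖ ≤ eunorm (x (φ₁ ν)) := norm_le_eunorm _
        _ ≤ βR (s (φ₁ ν)) := hxb _
        _ ≤ βR (t+1) := hβm (hsIci _) (by simp only [Set.mem_Ici]; linarith) (hsle _)
    obtain ⟨xbar, _, φ₂, hφ₂m, hxtend⟩ := (isCompact_closedBall (0 : Fin n → ℝ) (βR (t+1))).tendsto_subseq hxball
    -- subsequence for e
    have heball : ∀ ν, e (φ₁ (φ₂ ν)) ∈ Metric.closedBall (0 : Fin m → ℝ) ξ := by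
      intro ν
      rw [Metric.mem_closedBall, dist_zero_right]
      exact le_trans (norm_le_eunorm _) (heb _)
    obtain ⟨ebar, _, φ₃, hφ₃m, hetend⟩ := (isCompact_closedBall (0 : Fin m → ℝ) ξ).tendsto_subseq heball
    -- subsequence for y
    have hψ₃m : StrictMono (fun ν => φ₁ (φ₂ (φ₃ ν))) := hφ₁m.comp (hφ₂m.comp hφ₃m)
    obtain ⟨φ₄, hφ₄m, ybar, hybar, hytend⟩ := hYcp (fun ν => s (φ₁ (φ₂ (φ₃ ν))))
      (fun ν => y (φ₁ (φ₂ (φ₃ ν)))) t (fun ν => hsIci _) ht0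
      (hstt.comp hψ₃m.tendsto_atTop) (fun ν => hyY _)
    set ψ : ℕ → ℕ := fun ν => φ₁ (φ₂ (φ₃ (φ₄ ν))) with hψdef
    have hψm : StrictMono ψ := hψ₃m.comp hφ₄m
    -- convergences along ψ
    have hsψ : Tendsto (fun ν => s (ψ ν)) atTop (nhds t) := hstt.comp hψm.tendsto_atTop
    have hqψ : Tendsto (fun ν => q (ψ ν)) atTop (nhds qbar) :=
      hqtend.comp (hφ₂m.comp (hφ₃m.comp hφ₄m)).tendsto_atTop
    have hxψ : Tendsto (fun ν => x (ψ ν)) atTop (nhds xbar) :=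
      hxtend.comp (hφ₃m.comp hφ₄m).tendsto_atTop
    have heψ : Tendsto (fun ν => e (ψ ν)) atTop (nhds ebar) :=
      hetend.comp hφ₄m.tendsto_atTop
    have hyψ : Tendsto (fun ν => y (ψ ν)) atTop (nhds ybar) := hytend
    -- within-filters
    have hsψ0 : Tendsto (fun ν => s (ψ ν)) atTop (nhdsWithin t (Set.Ici 0)) :=
      tendsto_nhdsWithin_iff.mpr ⟨hsψ, Eventually.of_forall fun ν => hsIci _⟩
    have hsψt₀ : Tendsto (fun ν => s (ψ ν)) atTop (nhdsWithin t (Set.Ici t₀)) :=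
      tendsto_nhdsWithin_iff.mpr ⟨hsψ, Eventually.of_forall fun ν => hts _⟩
    -- entrywise convergences of matrices
    have hPentry : ∀ i j, Tendsto (fun ν => P (s (ψ ν)) i j) atTop (nhds (P t i j)) := by
      intro i j
      exact ((hPd t ht i j).continuousWithinAt.tendsto).comp hsψt₀
    have hP'entry : ∀ i j, Tendsto (fun ν => P' (s (ψ ν)) i j) atTop (nhds (P' t i j)) := by
      intro i j
      exact ((hP'c i j t ht).tendsto).comp hsψt₀
    have hHentry : ∀ i j, Tendsto (fun ν => H (s (ψ ν)) i j) atTop (nhds (H t i j)) := by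
      intro i j
      exact ((hH i j t ht0).tendsto).comp hsψ0
    have hAtend : Tendsto (fun ν => A (s (ψ ν)) (q (ψ ν)) (x (ψ ν)) (e (ψ ν)) (y (ψ ν)))
        atTop (nhds (A t qbar xbar ebar ybar)) := by
      have hmem : ((t, qbar, xbar, ebar, ybar) :
          ℝ × (Fin ℓ → ℝ) × (Fin n → ℝ) × (Fin m → ℝ) × (Fin nout → ℝ))
          ∈ Set.Ici (0:ℝ) ×ˢ (Set.univ : Set ((Fin ℓ → ℝ) × (Fin n → ℝ) × (Fin m → ℝ) × (Fin nout → ℝ))) :=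
        ⟨ht0, trivial⟩
      have hc := (hA _ hmem).tendsto
      have hseq : Tendsto (fun ν => ((s (ψ ν), q (ψ ν), x (ψ ν), e (ψ ν), y (ψ ν)) :
          ℝ × (Fin ℓ → ℝ) × (Fin n → ℝ) × (Fin m → ℝ) × (Fin nout → ℝ))) atTop
          (nhdsWithin (t, qbar, xbar, ebar, ybar) (Set.Ici 0 ×ˢ Set.univ)) := by
        rw [tendsto_nhdsWithin_iff]
        exact ⟨hsψ.prodMk_nhds (hqψ.prodMk_nhds (hxψ.prodMk_nhds (heψ.prodMk_nhds hyψ))),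
          Eventually.of_forall fun ν => ⟨hsIci _, trivial⟩⟩
      exact hc.comp hseq
    have hAentry : ∀ i j, Tendsto (fun ν => A (s (ψ ν)) (q (ψ ν)) (x (ψ ν)) (e (ψ ν)) (y (ψ ν)) i j)
        atTop (nhds (A t qbar xbar ebar ybar i j)) := by
      intro i j
      exact (tendsto_pi_nhds.mp (tendsto_pi_nhds.mp hAtend i) j)
    -- product matrix entries
    have hPAentry : ∀ i j, Tendsto
        (fun ν => (P (s (ψ ν)) * A (s (ψ ν)) (q (ψ ν)) (x (ψ ν)) (e (ψ ν)) (y (ψ ν))) i j)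
        atTop (nhds ((P t * A t qbar xbar ebar ybar) i j)) := by
      intro i j
      simp only [Matrix.mul_apply]
      exact tendsto_finset_sum _ fun k _ => (hPentry i k).mul (hAentry k j)
    -- quadratic forms
    have hquad1 : Tendsto (fun ν => e (ψ ν) ⬝ᵥ
        ((P (s (ψ ν)) * A (s (ψ ν)) (q (ψ ν)) (x (ψ ν)) (e (ψ ν)) (y (ψ ν))).mulVec (e (ψ ν))))
        atTop (nhds (ebar ⬝ᵥ ((P t * A t qbar xbar ebar ybar).mulVec ebar))) :=
      tendsto_quad hPAentry heψ
    have hquad2 : Tendsto (fun ν => e (ψ ν) ⬝ᵥ ((P' (s (ψ ν))).mulVec (e (ψ ν))))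
        atTop (nhds (ebar ⬝ᵥ ((P' t).mulVec ebar))) := tendsto_quad hP'entry heψ
    have hquadP : Tendsto (fun ν => e (ψ ν) ⬝ᵥ ((P (s (ψ ν))).mulVec (e (ψ ν))))
        atTop (nhds (ebar ⬝ᵥ ((P t).mulVec ebar))) := tendsto_quad hPentry heψ
    have hdbarψ : Tendsto (fun ν => dbar (s (ψ ν))) atTop (nhds (dbar t)) :=
      ((hdbarc t ht).tendsto).comp hsψt₀
    -- the G sequence
    have hGtend : Tendsto (fun ν =>
        e (ψ ν) ⬝ᵥ ((P (s (ψ ν)) * A (s (ψ ν)) (q (ψ ν)) (x (ψ ν)) (e (ψ ν)) (y (ψ ν))).mulVec (e (ψ ν)))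
        + (1/2) * (e (ψ ν) ⬝ᵥ ((P' (s (ψ ν))).mulVec (e (ψ ν))))
        + dbar (s (ψ ν)) * (e (ψ ν) ⬝ᵥ ((P (s (ψ ν))).mulVec (e (ψ ν))))) atTop
        (nhds (ebar ⬝ᵥ ((P t * A t qbar xbar ebar ybar).mulVec ebar)
          + (1/2) * (ebar ⬝ᵥ ((P' t).mulVec ebar)) + dbar t * (ebar ⬝ᵥ ((P t).mulVec ebar)))) :=
      (hquad1.add (tendsto_const_nhds.mul hquad2)).add (hdbarψ.mul hquadP)
    -- rewrite hlt with the product matrix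
    have hlt' : ∀ ν, ((ψ ν : ℝ)+1) * eunorm ((H (s (ψ ν))).mulVec (e (ψ ν))) ^ 2
        < e (ψ ν) ⬝ᵥ ((P (s (ψ ν)) * A (s (ψ ν)) (q (ψ ν)) (x (ψ ν)) (e (ψ ν)) (y (ψ ν))).mulVec (e (ψ ν)))
        + (1/2) * (e (ψ ν) ⬝ᵥ ((P' (s (ψ ν))).mulVec (e (ψ ν))))
        + dbar (s (ψ ν)) * (e (ψ ν) ⬝ᵥ ((P (s (ψ ν))).mulVec (e (ψ ν)))) := by
      intro ν
      have := hlt (ψ ν)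
      rw [Matrix.mulVec_mulVec] at this
      linarith
    -- the squared norm sequence tends to the limit value
    have hHe : Tendsto (fun ν => eunorm ((H (s (ψ ν))).mulVec (e (ψ ν))) ^ 2) atTop
        (nhds (eunorm ((H t).mulVec ebar) ^ 2)) := by
      have hmv : Tendsto (fun ν => (H (s (ψ ν))).mulVec (e (ψ ν))) atTop
          (nhds ((H t).mulVec ebar)) := by
        rw [tendsto_pi_nhds]
        intro i
        simp only [Matrix.mulVec, dotProduct]
        exact tendsto_finset_sum _ fun j _ =>
          (hHentry i j).mul (tendsto_pi_nhds.mp heψ j)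
      exact ((continuous_eunorm.tendsto _).comp hmv).pow 2
    -- squeeze: the squared norm tends to 0
    have hGnn : ∀ ν, 0 ≤ e (ψ ν) ⬝ᵥ ((P (s (ψ ν)) * A (s (ψ ν)) (q (ψ ν)) (x (ψ ν)) (e (ψ ν)) (y (ψ ν))).mulVec (e (ψ ν)))
        + (1/2) * (e (ψ ν) ⬝ᵥ ((P' (s (ψ ν))).mulVec (e (ψ ν))))
        + dbar (s (ψ ν)) * (e (ψ ν) ⬝ᵥ ((P (s (ψ ν))).mulVec (e (ψ ν)))) := by
      intro ν
      have h0 : (0:ℝ) ≤ ((ψ ν : ℝ)+1) * eunorm ((H (s (ψ ν))).mulVec (e (ψ ν))) ^ 2 :=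
        mul_nonneg (by positivity) (sq_nonneg _)
      linarith [hlt' ν]
    have hsq0 : Tendsto (fun ν => eunorm ((H (s (ψ ν))).mulVec (e (ψ ν))) ^ 2) atTop (nhds 0) := by
      apply squeeze_zero (fun ν => sq_nonneg _) (g := fun ν =>
        (e (ψ ν) ⬝ᵥ ((P (s (ψ ν)) * A (s (ψ ν)) (q (ψ ν)) (x (ψ ν)) (e (ψ ν)) (y (ψ ν))).mulVec (e (ψ ν)))
        + (1/2) * (e (ψ ν) ⬝ᵥ ((P' (s (ψ ν))).mulVec (e (ψ ν))))
        + dbar (s (ψ ν)) * (e (ψ ν) ⬝ᵥ ((P (s (ψ ν))).mulVec (e (ψ ν))))) * (1/((ν:ℝ)+1)))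
      · intro ν
        have hle : ν ≤ ψ ν := hψm.le_apply
        have hψge : ((ν:ℝ)+1) ≤ ((ψ ν : ℝ)+1) := by
          have : (ν:ℝ) ≤ (ψ ν : ℝ) := Nat.cast_le.mpr hle
          linarith
        have hpos : (0:ℝ) < (ν:ℝ)+1 := by positivity
        have h1 : ((ν:ℝ)+1) * eunorm ((H (s (ψ ν))).mulVec (e (ψ ν))) ^ 2
            ≤ ((ψ ν : ℝ)+1) * eunorm ((H (s (ψ ν))).mulVec (e (ψ ν))) ^ 2 :=
          mul_le_mul_of_nonneg_right hψge (sq_nonneg _)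
        have h2 := hlt' ν
        calc eunorm ((H (s (ψ ν))).mulVec (e (ψ ν))) ^ 2
            = (((ν:ℝ)+1) * eunorm ((H (s (ψ ν))).mulVec (e (ψ ν))) ^ 2) * (1/((ν:ℝ)+1)) := by
              field_simp
          _ ≤ _ := mul_le_mul_of_nonneg_right (by linarith) (by positivity)
      · have := hGtend.mul tendsto_one_div_add_atTop_nhds_zero_nat
        simpa using this
    -- limit of squared norm is 0
    have hHe0 : eunorm ((H t).mulVec ebar) ^ 2 = 0 := tendsto_nhds_unique hHe hsq0
    have hker : (H t).mulVec ebar = 0 :=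
      eunorm_eq_zero (pow_eq_zero_iff (two_ne_zero) |>.mp hHe0)
    -- limit admissibility
    have hxble : eunorm xbar ≤ βR t := by
      refine le_of_tendsto_of_tendsto' ((continuous_eunorm.tendsto _).comp hxψ)
        (((hβc t ht0).tendsto).comp hsψ0) (fun ν => hxb (ψ ν))
    have hele : eunorm ebar ≤ ξ :=
      le_of_tendsto ((continuous_eunorm.tendsto _).comp heψ)
        (Eventually.of_forall fun ν => heb (ψ ν))
    have hgle : g t ≤ ebar ⬝ᵥ ((P t).mulVec ebar) :=
      le_of_tendsto_of_tendsto' (((hgc t ht0).tendsto).comp hsψ0) hquadP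
        (fun ν => hgep (ψ ν))
    -- nonnegativity of the limit
    have hGlim : 0 ≤ ebar ⬝ᵥ ((P t * A t qbar xbar ebar ybar).mulVec ebar)
        + (1/2) * (ebar ⬝ᵥ ((P' t).mulVec ebar)) + dbar t * (ebar ⬝ᵥ ((P t).mulVec ebar)) :=
      ge_of_tendsto hGtend (Eventually.of_forall hGnn)
    -- apply the hypothesis at the limit point
    have hmain := hineq t ht qbar hqbar xbar hxble ebar hker hele hgle ybar hybar
    rw [← Matrix.mulVec_mulVec] at hGlim
    have hdlt := hdbarlt t ht
    have hg0 := (hg01 t ht0).1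
    nlinarith [hmain, hGlim, hgle, hg0, hdlt, mul_pos (sub_pos.mpr hdlt) (lt_of_lt_of_le hg0 hgle),
      mul_le_mul_of_nonneg_left hgle (le_of_lt (sub_pos.mpr hdlt))]
  have Hloc : ∀ t : ℝ, ∃ c : ℝ, ∀ᶠ u in nhds t, c ∈ T u := by
    intro t
    rcases lt_or_ge t t₀ with h | h
    · refine ⟨1, ?_⟩
      filter_upwards [Iio_mem_nhds h] with u hu
      exact ⟨le_refl 1, fun hts => absurd hts (not_le.mpr hu)⟩
    · exact key t h
  obtain ⟨φ₀, hφ₀⟩ := exists_contMDiffMap_forall_mem_convex_of_local_const (modelWithCornersSelf ℝ ℝ) (n := (⊤ : ℕ∞)) hconv Hloc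
  have hφsm : ContDiff ℝ ((⊤ : ℕ∞) : WithTop ℕ∞) (φ₀ : ℝ → ℝ) :=
    contMDiff_iff_contDiff.mp φ₀.contMDiff
  have hone : (1 : WithTop ℕ∞) ≤ ((⊤ : ℕ∞) : WithTop ℕ∞) := by
    exact_mod_cast le_top
  refine ⟨φ₀, deriv (φ₀ : ℝ → ℝ), ?_, ?_, ?_, ?_⟩
  · intro t ht; have := (hφ₀ t).1; linarith
  · exact (hφsm.continuous_deriv hone).continuousOn
  · intro t ht
    exact ((hφsm.differentiable (ne_of_gt (lt_of_lt_of_le one_pos hone))) t).hasDerivAt.hasDerivWithinAt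
  · intro t ht q hq x hx e he hge y hy
    exact (hφ₀ t).2 ht q hq x hx e he hge y hy
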